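/- arXiv:1610.04944 — 2 statements merged into one kernel-verified Lean document; each statement's English description precedes it below -/
import Mathlib

section
/- Let (W,S) be a Coxeter system with Bruhat order ≤. For any elements u, v ∈ W, the set {u'v : u' ≤ u} has a maximum element with respect to the Bruhat order. -/
/-!
The maximum is built along a reduced word `i :: ω` of `u`: if `u₀ * v` is the maximum for
`π ω`, then the maximum for `u = s i * π ω` is the longer of `u₀ * v` and `s i * u₀ * v`. This
rests on two facts about the Bruhat order: the lifting property, and that every `u' ≤ u` satisfies
`u' ≤ s i * u` or `s i * u' ≤ s i * u`.

Both follow from the subword property: the subword order coincides with the order generated by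
the steps `t * y < y` for reflections `t`. Its proof uses the strong exchange condition, which in
turn comes from the fact that the parity of the number of occurrences of `t` in the left inversion
sequence of a word depends only on the product of the word. That parity is read off from the
action of `W` on `W × ZMod 2` in which `s i` conjugates the first component by `s i` and flips the
second one exactly when the first one is `s i`.
-/

/-- The Bruhat order on a Coxeter group: `u ≤ v` iff some reduced word for `v`
contains a reduced word for `u` as a subword. -/
def bruhatLE {B W : Type*} [Group W] {M : CoxeterMatrix B} (cs : CoxeterSystem M W)
    (u v : W) : Prop :=
  ∃ ω : List B, cs.IsReduced ω ∧ cs.wordProd ω = v ∧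
    ∃ ω' : List B, ω'.Sublist ω ∧ cs.IsReduced ω' ∧ cs.wordProd ω' = u

open List

namespace CoxeterSystem

variable {B W : Type*} [Group W] {M : CoxeterMatrix B} (cs : CoxeterSystem M W)

local prefix:100 "s " => cs.simple
local prefix:100 "π " => cs.wordProd
local prefix:100 "ℓ " => cs.length
local prefix:100 "lis " => cs.leftInvSeq
local prefix:100 "ris " => cs.rightInvSeq

theorem prod_map_alternatingWord_two_mul {G : Type*} [Monoid G] (f : B → G) (i i' : B) (m : ℕ) :
    ((alternatingWord i i' (2 * m)).map f).prod = (f i * f i') ^ m := by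
  induction m with
  | zero => simp [alternatingWord]
  | succ m ih =>
    rw [mul_add_one, alternatingWord_succ', alternatingWord_succ']
    simp [ih, pow_succ', mul_assoc]

theorem leftInvSeq_append (ω ω' : List B) :
    lis (ω ++ ω') = lis ω ++ (lis ω').map (MulAut.conj (π ω)) := by
  induction ω with
  | nil => simp
  | cons i ω ih => simp [leftInvSeq, ih, wordProd_cons, Function.comp_def]

theorem leftInvSeq_eq_map_rightInvSeq (ω : List B) :
    lis ω = (ris ω).map (MulAut.conj (π ω)) := by
  induction ω with
  | nil => simp
  | cons i ω ih =>
    simp only [leftInvSeq, rightInvSeq, ih, map_cons, map_map, wordProd_cons, cons.injEq]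
    constructor
    · simp [mul_assoc]
    · simp [Function.comp_def]

theorem conj_simple_apply_eq_simple_iff (i : B) (t : W) :
    MulAut.conj (s i) t = s i ↔ t = s i := by
  nth_rw 2 [← show MulAut.conj (s i) (s i) = s i by simp]
  exact (MulAut.conj (s i)).apply_eq_iff_eq

section ReflectionSign

variable [DecidableEq W]

def reflectionSignPerm (i : B) : Equiv.Perm (W × ZMod 2) :=
  Function.Involutive.toPerm
    (fun p => (MulAut.conj (s i) p.1, p.2 + if p.1 = s i then 1 else 0)) <| by
      rintro ⟨t, e⟩
      refine Prod.ext ?_ ?_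
      · show MulAut.conj (s i) (MulAut.conj (s i) t) = t
        rw [← MulAut.mul_apply, ← map_mul, simple_mul_simple_self, map_one, MulAut.one_apply]
      · show e + _ + (if MulAut.conj (s i) t = s i then 1 else 0) = e
        simp only [conj_simple_apply_eq_simple_iff, add_assoc, CharTwo.add_self_eq_zero, add_zero]

theorem prod_map_reflectionSignPerm_apply (ω : List B) (t : W) (e : ZMod 2) :
    (ω.map cs.reflectionSignPerm).prod (t, e) =
      (MulAut.conj (π ω) t, e + count (MulAut.conj (π ω) t) (lis ω)) := by
  induction ω with
  | nil => simp
  | cons i ω ih =>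
    rw [map_cons, prod_cons, Equiv.Perm.mul_apply, ih]
    set x := MulAut.conj (π ω) t
    have hx : MulAut.conj (π (i :: ω)) t = MulAut.conj (s i) x := by
      rw [wordProd_cons, map_mul, MulAut.mul_apply]
    simp only [hx, leftInvSeq, count_cons, count_map_of_injective _ _ (MulAut.conj (s i)).injective]
    refine Prod.ext rfl ?_
    show e + _ + (if x = s i then 1 else 0) = _
    simp only [beq_iff_eq, eq_comm (a := s i), conj_simple_apply_eq_simple_iff, Nat.cast_add,
      Nat.cast_ite, Nat.cast_one, Nat.cast_zero, add_assoc]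

theorem natCast_count_leftInvSeq_alternatingWord (i i' : B) (t : W) :
    (count t (lis (alternatingWord i i' (2 * M i i'))) : ZMod 2) = 0 := by
  set m := M i i'
  set L := lis (alternatingWord i i' (2 * m))
  have hodd (n : ℕ) : π (alternatingWord i' i (2 * n + 1)) = s i * (s i' * s i) ^ n := by
    rw [prod_alternatingWord_eq_mul_pow, if_neg (by simp [parity_simps]),
      show (2 * n + 1) / 2 = n by omega]
  have hlen : L.length = 2 * m := by simp [L]
  have htake : (L.take m).length = m := by simp [hlen]; omega
  have hL : L = L.take m ++ L.take m := by
    refine ext_getElem (by simp [hlen]; omega) fun k hk _ => ?_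
    rcases lt_or_ge k m with hkm | hkm
    · rw [getElem_append_left (by omega), getElem_take]
    · obtain ⟨j, rfl⟩ := Nat.exists_eq_add_of_le' hkm
      rw [getElem_append_right (by omega), getElem_take]
      simp only [htake, Nat.add_sub_cancel]
      rw [getElem_leftInvSeq_alternatingWord cs i i' m _ (by omega),
        getElem_leftInvSeq_alternatingWord cs i i' m _ (by omega), hodd, hodd, pow_add,
        simple_mul_simple_pow', mul_one]
  rw [hL, count_append, Nat.cast_add, CharTwo.add_self_eq_zero]

theorem isLiftable_reflectionSignPerm : M.IsLiftable cs.reflectionSignPerm := by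
  intro i i'
  have hprod : π (alternatingWord i i' (2 * M i i')) = 1 := by
    rw [prod_alternatingWord_eq_mul_pow, if_pos (by simp), Nat.mul_div_cancel_left _ two_pos,
      simple_mul_simple_pow, one_mul]
  rw [← prod_map_alternatingWord_two_mul]
  ext ⟨t, e⟩ : 1
  rw [prod_map_reflectionSignPerm_apply, hprod, map_one, MulAut.one_apply,
    natCast_count_leftInvSeq_alternatingWord, add_zero, Equiv.Perm.one_apply]

theorem natCast_count_leftInvSeq_eq_of_wordProd_eq {ω ω' : List B} (h : π ω = π ω') (t : W) :
    (count t (lis ω) : ZMod 2) = count t (lis ω') := by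
  set φ := cs.lift ⟨_, cs.isLiftable_reflectionSignPerm⟩
  have hφ (ω : List B) : φ (π ω) = (ω.map cs.reflectionSignPerm).prod := by
    rw [wordProd, map_list_prod, map_map]
    congr 1
    exact map_congr_left fun i _ => cs.lift_apply_simple _ i
  have key : (φ (π ω) (MulAut.conj (π ω)⁻¹ t, 0)).2 = (φ (π ω') (MulAut.conj (π ω)⁻¹ t, 0)).2 :=
    by rw [h]
  have ht : MulAut.conj (π ω) (MulAut.conj (π ω)⁻¹ t) = t := by
    rw [← MulAut.mul_apply, ← map_mul, mul_inv_cancel, map_one, MulAut.one_apply]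
  rw [hφ, hφ, prod_map_reflectionSignPerm_apply, prod_map_reflectionSignPerm_apply, ← h, ht] at key
  rwa [zero_add, zero_add] at key

theorem natCast_count_leftInvSeq_palindrome (χ : List B) (i : B) :
    (count (MulAut.conj (π χ) (s i)) (lis (χ ++ i :: χ.reverse)) : ZMod 2) = 1 := by
  have hinj := (MulAut.conj (π χ)).injective
  have hhead : count (MulAut.conj (π χ) (s i)) (lis χ) = count (s i) (ris χ) := by
    rw [leftInvSeq_eq_map_rightInvSeq, count_map_of_injective _ _ hinj]
  have htail : count (MulAut.conj (π χ) (s i)) ((lis (i :: χ.reverse)).map (MulAut.conj (π χ)))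
      = count (s i) (ris χ) + 1 := by
    have hfix : MulAut.conj (s i) (s i) = s i := by simp
    rw [count_map_of_injective _ _ hinj, leftInvSeq, count_cons_self, leftInvSeq_reverse]
    nth_rw 1 [← hfix]
    rw [count_map_of_injective _ _ (MulAut.conj (s i)).injective, count_reverse]
  rw [leftInvSeq_append, count_append, hhead, htail, Nat.cast_add, Nat.cast_add, ← add_assoc,
    CharTwo.add_self_eq_zero, zero_add, Nat.cast_one]

end ReflectionSign

theorem mem_leftInvSeq_of_isLeftInversion {ω : List B} {t : W}
    (ht : cs.IsLeftInversion (π ω) t) : t ∈ lis ω := by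
  classical
  obtain ⟨⟨x, i, hx⟩, hlt⟩ := ht
  obtain ⟨χ, rfl⟩ := cs.wordProd_surjective x
  have htt : t * t = 1 := IsReflection.mul_self ⟨_, i, hx⟩
  have hpal : π (χ ++ i :: χ.reverse) = t := by
    rw [hx]
    simp [wordProd_append, wordProd_cons, mul_assoc]
  have hpal_count : (count t (lis (χ ++ i :: χ.reverse)) : ZMod 2) = 1 := by
    rw [hx]
    exact cs.natCast_count_leftInvSeq_palindrome χ i
  obtain ⟨ρ, hρ, hρeq⟩ := cs.exists_isReduced (t * π ω)
  have hρ_count : count t ((lis ρ).map (MulAut.conj t)) = count t (lis ρ) := by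
    nth_rw 1 [← show MulAut.conj t t = t by rw [MulAut.conj_apply, mul_inv_cancel_right]]
    exact count_map_of_injective _ _ (MulAut.conj t).injective _
  have hω : π ω = π (χ ++ i :: χ.reverse ++ ρ) := by
    rw [wordProd_append, hpal, ← hρeq, ← mul_assoc, htt, one_mul]
  -- Otherwise `t` occurs an even number of times in `lis ω`, hence an odd number of times in
  -- `lis ρ`, which makes `t` a left inversion of `π ρ = t * π ω`.
  by_contra hnot
  have hcount := cs.natCast_count_leftInvSeq_eq_of_wordProd_eq hω t
  rw [count_eq_zero_of_not_mem hnot, leftInvSeq_append, count_append, hpal, hρ_count,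
    Nat.cast_add, hpal_count] at hcount
  have hmem : t ∈ lis ρ := by
    by_contra h
    rw [count_eq_zero_of_not_mem h] at hcount
    exact absurd hcount (by decide)
  have hρ_lt := (cs.isLeftInversion_of_mem_leftInvSeq hρ hmem).2
  rw [← hρeq, ← mul_assoc, htt, one_mul] at hρ_lt
  exact lt_asymm hlt hρ_lt

theorem exists_eraseIdx_of_isLeftInversion {ω : List B} {t : W}
    (ht : cs.IsLeftInversion (π ω) t) : ∃ j < ω.length, t * π ω = π (ω.eraseIdx j) := by
  obtain ⟨j, hj, rfl⟩ := mem_iff_getElem.mp (cs.mem_leftInvSeq_of_isLeftInversion ht)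
  exact ⟨j, by simpa using hj, by rw [← getD_eq_getElem _ 1, getD_leftInvSeq_mul_wordProd]⟩

theorem isReduced_cons_iff {i : B} {ω : List B} :
    cs.IsReduced (i :: ω) ↔ cs.IsReduced ω ∧ ¬cs.IsLeftDescent (π ω) i := by
  rw [IsReduced, IsReduced, wordProd_cons, not_isLeftDescent_iff, length_cons]
  have := cs.length_wordProd_le ω
  rcases cs.length_simple_mul (π ω) i with h | h <;> omega

theorem exists_isReduced_sublist (ω : List B) :
    ∃ ω', ω' <+ ω ∧ cs.IsReduced ω' ∧ π ω' = π ω := by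
  induction ω with
  | nil => exact ⟨[], Sublist.slnil, by simp [IsReduced], rfl⟩
  | cons i ω ih =>
    obtain ⟨ω₁, hsub, hred, hprod⟩ := ih
    by_cases hi : cs.IsLeftDescent (π ω₁) i
    · obtain ⟨j, hj, hjeq⟩ := cs.exists_eraseIdx_of_isLeftInversion
        ((cs.isLeftInversion_simple_iff_isLeftDescent _ i).mpr hi)
      refine ⟨ω₁.eraseIdx j, (eraseIdx_sublist ω₁ j).trans (hsub.cons i), ?_, ?_⟩
      · rw [IsReduced, ← hjeq]
        have := length_eraseIdx_add_one hj
        rw [isLeftDescent_iff, hred] at hi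
        omega
      · rw [← hjeq, wordProd_cons, hprod]
    · exact ⟨i :: ω₁, hsub.cons_cons i, cs.isReduced_cons_iff.mpr ⟨hred, hi⟩, by
        rw [wordProd_cons, wordProd_cons, hprod]⟩

def BruhatStep (x y : W) : Prop := ∃ t, cs.IsLeftInversion y t ∧ x = t * y

def BruhatChain : W → W → Prop := Relation.ReflTransGen cs.BruhatStep

variable {cs}

theorem BruhatStep.length_lt {x y : W} (h : cs.BruhatStep x y) : ℓ x < ℓ y := by
  obtain ⟨t, ⟨-, hlt⟩, rfl⟩ := h
  exact hlt

theorem bruhatStep_simple_mul_of_isLeftDescent {y : W} {i : B} (hy : cs.IsLeftDescent y i) :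
    cs.BruhatStep (s i * y) y :=
  ⟨s i, ⟨cs.isReflection_simple i, hy⟩, rfl⟩

theorem bruhatStep_simple_mul {x : W} {i : B} (hx : ¬cs.IsLeftDescent x i) :
    cs.BruhatStep x (s i * x) := by
  rw [cs.isLeftDescent_iff_not_isLeftDescent_mul] at hx
  simpa only [simple_mul_simple_cancel_left] using
    bruhatStep_simple_mul_of_isLeftDescent (not_not.mp hx)

theorem BruhatStep.simple_mul {x y : W} {i : B} (h : cs.BruhatStep x y)
    (hlt : ℓ (s i * x) < ℓ (s i * y)) : cs.BruhatStep (s i * x) (s i * y) := by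
  obtain ⟨t, ⟨ht, -⟩, rfl⟩ := h
  refine ⟨s i * t * s i, ⟨by simpa using ht.conj (s i), ?_⟩, ?_⟩
  · simpa only [mul_assoc, simple_mul_simple_cancel_left] using hlt
  · simp only [mul_assoc, simple_mul_simple_cancel_left]

theorem BruhatStep.eq_simple_mul_or_length_simple_mul_lt {x y : W} (h : cs.BruhatStep x y)
    (i : B) : x = s i * y ∨ ℓ (s i * x) < ℓ (s i * y) := by
  obtain ⟨t, ht, rfl⟩ := h
  obtain ⟨Ω, hΩ, hΩeq⟩ := cs.exists_isReduced (s i * y)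
  have hy' : y = π (i :: Ω) := by rw [wordProd_cons, ← hΩeq, simple_mul_simple_cancel_left]
  rw [hy'] at ht ⊢
  obtain ⟨j, hj, hjeq⟩ := cs.exists_eraseIdx_of_isLeftInversion ht
  rw [hjeq]
  cases j with
  | zero => left; simp [wordProd_cons]
  | succ j =>
    right
    rw [eraseIdx_cons_succ, wordProd_cons, wordProd_cons, simple_mul_simple_cancel_left,
      simple_mul_simple_cancel_left, hΩ]
    have := length_eraseIdx_add_one (Nat.lt_of_succ_lt_succ hj)
    have := cs.length_wordProd_le (Ω.eraseIdx j)
    omega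

theorem BruhatChain.lifting {x y : W} (h : cs.BruhatChain x y) (i : B) :
    (cs.IsLeftDescent y i → cs.BruhatChain (s i * x) y) ∧
      (¬cs.IsLeftDescent y i → cs.BruhatChain (s i * x) (s i * y)) := by
  induction h with
  | refl => exact ⟨fun hx => .single (bruhatStep_simple_mul_of_isLeftDescent hx), fun _ => .refl⟩
  | @tail z y _ hzy ih =>
    by_cases hz : cs.IsLeftDescent z i
    · have hxy : cs.BruhatChain (s i * x) y := (ih.1 hz).tail hzy
      exact ⟨fun _ => hxy, fun hy => hxy.tail (bruhatStep_simple_mul hy)⟩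
    refine ⟨fun hy => ?_, fun hy => (ih.2 hz).tail (hzy.simple_mul ?_)⟩
    · rcases hzy.eq_simple_mul_or_length_simple_mul_lt i with rfl | hlt
      · simpa only [simple_mul_simple_cancel_left] using ih.2 hz
      · exact ((ih.2 hz).tail (hzy.simple_mul hlt)).tail
          (bruhatStep_simple_mul_of_isLeftDescent hy)
    · rw [not_isLeftDescent_iff] at hz hy
      have := hzy.length_lt
      omega

theorem BruhatChain.simple_mul_of_isLeftDescent {x y : W} {i : B} (h : cs.BruhatChain x y)
    (hy : cs.IsLeftDescent y i) : cs.BruhatChain (s i * x) y :=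
  (h.lifting i).1 hy

theorem BruhatChain.simple_mul {x y : W} {i : B} (h : cs.BruhatChain x y)
    (hy : ¬cs.IsLeftDescent y i) : cs.BruhatChain (s i * x) (s i * y) :=
  (h.lifting i).2 hy

theorem bruhatChain_wordProd_of_sublist {ω' ω : List B} (h : ω' <+ ω) (hω : cs.IsReduced ω) :
    cs.BruhatChain (π ω') (π ω) := by
  induction h with
  | slnil => exact .refl
  | cons i _ ih =>
    obtain ⟨hω, hi⟩ := cs.isReduced_cons_iff.mp hω
    rw [wordProd_cons]
    exact (ih hω).tail (bruhatStep_simple_mul hi)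
  | cons_cons i _ ih =>
    obtain ⟨hω, hi⟩ := cs.isReduced_cons_iff.mp hω
    rw [wordProd_cons, wordProd_cons]
    exact (ih hω).simple_mul hi

theorem BruhatChain.exists_sublist {x y : W} (h : cs.BruhatChain x y) {ω : List B}
    (hω : π ω = y) : ∃ ω', ω' <+ ω ∧ cs.IsReduced ω' ∧ π ω' = x := by
  induction h using Relation.ReflTransGen.head_induction_on with
  | refl =>
    obtain ⟨ω', h, hred, hprod⟩ := cs.exists_isReduced_sublist ω
    exact ⟨ω', h, hred, hprod.trans hω⟩
  | head hstep _ ih =>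
    obtain ⟨ω₁, h₁, -, rfl⟩ := ih
    obtain ⟨t, ht, rfl⟩ := hstep
    obtain ⟨j, -, hj⟩ := cs.exists_eraseIdx_of_isLeftInversion ht
    obtain ⟨ω₂, h₂, hred, hprod⟩ := cs.exists_isReduced_sublist (ω₁.eraseIdx j)
    exact ⟨ω₂, h₂.trans ((eraseIdx_sublist _ _).trans h₁), hred, hprod.trans hj.symm⟩

theorem BruhatChain.eq_one {x : W} (h : cs.BruhatChain x 1) : x = 1 := by
  obtain ⟨ω', h', -, rfl⟩ := h.exists_sublist (ω := []) rfl
  rw [sublist_nil.mp h', wordProd_nil]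

variable (cs) in
theorem bruhatLE_iff_bruhatChain {x y : W} : bruhatLE cs x y ↔ cs.BruhatChain x y := by
  constructor
  · rintro ⟨ω, hω, rfl, ω', h, -, rfl⟩
    exact bruhatChain_wordProd_of_sublist h hω
  · intro h
    obtain ⟨ω, hω, rfl⟩ := cs.exists_isReduced y
    obtain ⟨ω', h', hred', rfl⟩ := h.exists_sublist rfl
    exact ⟨ω, hω, rfl, ω', h', hred', rfl⟩

theorem BruhatChain.or_simple_mul {u : W} {i : B} {ω : List B} (hω : cs.IsReduced (i :: ω))
    (h : cs.BruhatChain u (π (i :: ω))) :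
    cs.BruhatChain u (π ω) ∨ cs.BruhatChain (s i * u) (π ω) := by
  have hω' := (cs.isReduced_cons_iff.mp hω).1
  obtain ⟨ω', hsub, -, rfl⟩ := h.exists_sublist rfl
  rcases sublist_cons_iff.mp hsub with h | ⟨r, rfl, hr⟩
  · exact .inl (bruhatChain_wordProd_of_sublist h hω')
  · rw [wordProd_cons, simple_mul_simple_cancel_left]
    exact .inr (bruhatChain_wordProd_of_sublist hr hω')

theorem exists_bruhatChain_max_mul {ω : List B} (hω : cs.IsReduced ω) (v : W) :
    ∃ u₀, cs.BruhatChain u₀ (π ω) ∧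
      ∀ u, cs.BruhatChain u (π ω) → cs.BruhatChain (u * v) (u₀ * v) := by
  induction ω with
  | nil =>
    refine ⟨1, .refl, fun u hu => ?_⟩
    rw [hu.eq_one]
    exact .refl
  | cons i ω ih =>
    obtain ⟨hω', hi⟩ := cs.isReduced_cons_iff.mp hω
    obtain ⟨u₀, hu₀, hmax⟩ := ih hω'
    by_cases hv : cs.IsLeftDescent (u₀ * v) i
    · refine ⟨u₀, hu₀.tail (by rw [wordProd_cons]; exact bruhatStep_simple_mul hi),
        fun u hu => ?_⟩
      rcases hu.or_simple_mul hω with h | h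
      · exact hmax u h
      · simpa only [mul_assoc, simple_mul_simple_cancel_left] using
          (hmax _ h).simple_mul_of_isLeftDescent hv
    · refine ⟨s i * u₀, by rw [wordProd_cons]; exact hu₀.simple_mul hi, fun u hu => ?_⟩
      rw [mul_assoc]
      rcases hu.or_simple_mul hω with h | h
      · exact (hmax u h).tail (bruhatStep_simple_mul hv)
      · simpa only [mul_assoc, simple_mul_simple_cancel_left] using (hmax _ h).simple_mul hv

end CoxeterSystem

/-- For any `u, v` in a Coxeter group, the set `{u' * v : u' ≤ u}` has a
Bruhat-maximum element. -/
theorem stmt0 {B W : Type*} [Group W] {M : CoxeterMatrix B} (cs : CoxeterSystem M W)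
    (u v : W) :
    ∃ m ∈ {x : W | ∃ u' : W, bruhatLE cs u' u ∧ x = u' * v},
      ∀ x ∈ {x : W | ∃ u' : W, bruhatLE cs u' u ∧ x = u' * v}, bruhatLE cs x m := by
  obtain ⟨ω, hω, rfl⟩ := cs.exists_isReduced u
  obtain ⟨u₀, hu₀, hmax⟩ := cs.exists_bruhatChain_max_mul hω v
  simp only [CoxeterSystem.bruhatLE_iff_bruhatChain]
  refine ⟨u₀ * v, ⟨u₀, hu₀, rfl⟩, ?_⟩
  rintro _ ⟨u, hu, rfl⟩
  exact hmax u hu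
end

section
/- Let (R, Λ, S) be a generalized Renner–Coxeter system whose unit group W is finite with longest element w₀. Then (R, w₀Λw₀, S) is also a generalized Renner–Coxeter system; in particular w₀Λw₀ is a transversal of the idempotents for the W-conjugation action, and for each e ∈ w₀Λw₀ the centralizer {w : we = ew} and the stabilizer {w : we = ew = e} are standard parabolic subgroups of W. -/
/-- The standard parabolic subgroup generated by the simple reflections in `I`. -/
def parabolic {B W : Type*} [Group W] {M : CoxeterMatrix B} (cs : CoxeterSystem M W)
    (I : Set B) : Subgroup W :=
  Subgroup.closure (cs.simple '' I)

/-- The natural partial order on idempotents: `e ≤ f ↔ ef = fe = e`. -/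
def idemLE {R : Type*} [Monoid R] (e f : R) : Prop := e * f = e ∧ f * e = e

/-- A generalized Renner–Coxeter system `(R, Λ, S)` in the sense of Godelle:
`R` is a factorizable monoid whose group of units `Rˣ` carries a Coxeter system,
`Λ` is a cross-sectional sub-meet-semilattice of the idempotents, and the
centralizer and fixer of each `e ∈ Λ` are standard parabolic subgroups. -/
structure RennerCoxeterSystem (B : Type*) (M : CoxeterMatrix B) (R : Type*) [Monoid R] where
  /-- the Coxeter system on the group of units -/
  cs : CoxeterSystem M Rˣ
  /-- the cross-sectional lattice -/
  Λ : Set R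
  idem_mem : ∀ e ∈ Λ, e * e = e
  /-- `R` is unit regular: `R = E(R)·Rˣ` -/
  factorizableL : ∀ r : R, ∃ (e : R) (u : Rˣ), e * e = e ∧ r = e * ↑u
  /-- `R` is unit regular: `R = Rˣ·E(R)` -/
  factorizableR : ∀ r : R, ∃ (e : R) (u : Rˣ), e * e = e ∧ r = ↑u * e
  /-- `E(R)` is a meet semilattice for the order `e ≤ f ↔ ef = fe = e` -/
  meet_exists : ∀ e f : R, e * e = e → f * f = f → ∃ g : R, g * g = g ∧
    idemLE g e ∧ idemLE g f ∧ ∀ h : R, h * h = h → idemLE h e → idemLE h f → idemLE h g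
  /-- `Λ` is a transversal of `E(R)` for the conjugation action of the units -/
  transversal : ∀ f : R, f * f = f → ∃! e : R, e ∈ Λ ∧ ∃ w : Rˣ, f = ↑w * e * ↑w⁻¹
  /-- `Λ` is a sub-meet-semilattice -/
  Λ_meet : ∀ e ∈ Λ, ∀ f ∈ Λ, ∃ g ∈ Λ, g * g = g ∧ idemLE g e ∧ idemLE g f ∧
    ∀ h : R, h * h = h → idemLE h e → idemLE h f → idemLE h g
  /-- comparable pairs of idempotents can be simultaneously conjugated into `Λ` -/
  pair_conj : ∀ e e' : R, e * e = e → e' * e' = e' → idemLE e e' →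
    ∃ w : Rˣ, ∃ f ∈ Λ, ∃ f' ∈ Λ, idemLE f f' ∧ ↑w * e * ↑w⁻¹ = f ∧ ↑w * e' * ↑w⁻¹ = f'
  /-- the upper type map `λ^*(e) = {s ∈ S | se = es ≠ e}` is monotone on `Λ` -/
  upperStar_mono : ∀ e ∈ Λ, ∀ f ∈ Λ, idemLE e f →
    {s : B | (cs.simple s : R) * e = e * cs.simple s ∧ (cs.simple s : R) * e ≠ e} ⊆
    {s : B | (cs.simple s : R) * f = f * cs.simple s ∧ (cs.simple s : R) * f ≠ f}
  /-- the type map `λ` -/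
  lam : R → Set B
  /-- the lower type map `λ_*` -/
  lamStar : R → Set B
  /-- the centralizer of `e ∈ Λ` is the standard parabolic subgroup `W_{λ(e)}` -/
  centralizer_eq : ∀ e ∈ Λ,
    {w : Rˣ | (↑w : R) * e = e * ↑w} = ↑(parabolic cs (lam e))
  /-- the fixer of `e ∈ Λ` is the standard parabolic subgroup `W_{λ_*(e)}` -/
  fixer_eq : ∀ e ∈ Λ,
    {w : Rˣ | (↑w : R) * e = e ∧ e * ↑w = e} = ↑(parabolic cs (lamStar e))

namespace RennerCoxeterSystem

variable {B : Type*} {M : CoxeterMatrix B} {R : Type*} [Monoid R]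

/-- The upper type map `λ^*(e) = {s ∈ S | se = es ≠ e}`. -/
def upperStar (rcs : RennerCoxeterSystem B M R) (e : R) : Set B :=
  {s : B | (rcs.cs.simple s : R) * e = e * rcs.cs.simple s ∧ (rcs.cs.simple s : R) * e ≠ e}

/-- `w ∈ W^K`: no reduced word for `w` ends with a generator from `K`. -/
def minRight (rcs : RennerCoxeterSystem B M R) (K : Set B) (w : Rˣ) : Prop :=
  ∀ s ∈ K, rcs.cs.length w < rcs.cs.length (w * rcs.cs.simple s)

/-- `w ∈ ᴷW`: no reduced word for `w` begins with a generator from `K`. -/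
def minLeft (rcs : RennerCoxeterSystem B M R) (K : Set B) (w : Rˣ) : Prop :=
  ∀ s ∈ K, rcs.cs.length w < rcs.cs.length (rcs.cs.simple s * w)

/-- `r = x e y` is in left standard form: `e ∈ Λ`, `x ∈ W^{λ_*(e)}`, `y ∈ ^{λ(e)}W`. -/
def LSF (rcs : RennerCoxeterSystem B M R) (r : R) (x : Rˣ) (e : R) (y : Rˣ) : Prop :=
  e ∈ rcs.Λ ∧ rcs.minRight (rcs.lamStar e) x ∧ rcs.minLeft (rcs.lam e) y ∧
    r = ↑x * e * ↑y

/-- `r = y e x` is in right standard form: `e ∈ Λ`, `y ∈ W^{λ(e)}`, `x ∈ ^{λ_*(e)}W`. -/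
def RSF (rcs : RennerCoxeterSystem B M R) (r : R) (y : Rˣ) (e : R) (x : Rˣ) : Prop :=
  e ∈ rcs.Λ ∧ rcs.minRight (rcs.lam e) y ∧ rcs.minLeft (rcs.lamStar e) x ∧
    r = ↑y * e * ↑x

/-- The adherence order `≤⁺`, defined via left standard forms:
for `r = xey`, `s = afb`, `r ≤⁺ s` iff `e ≤ f` and there is
`w ∈ W_{λ^*(f)} W_{λ_*(e)}` with `x ≤ aw` and `w⁻¹b ≤ y`. -/
def adhP (rcs : RennerCoxeterSystem B M R) (r s : R) : Prop :=
  ∃ (x : Rˣ) (e : R) (y : Rˣ) (a : Rˣ) (f : R) (b : Rˣ),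
    rcs.LSF r x e y ∧ rcs.LSF s a f b ∧ idemLE e f ∧
    ∃ p ∈ parabolic rcs.cs (rcs.upperStar f), ∃ q ∈ parabolic rcs.cs (rcs.lamStar e),
      bruhatLE rcs.cs x (a * (p * q)) ∧ bruhatLE rcs.cs ((p * q)⁻¹ * b) y

/-- The adherence order `≤⁻`, defined via right standard forms:
for `r = yex`, `s = bfa`, `r ≤⁻ s` iff `e ≤ f` and there is
`w ∈ W_{λ_*(e)} W_{λ^*(f)}` with `x ≤ wa` and `bw⁻¹ ≤ y`. -/
def adhM (rcs : RennerCoxeterSystem B M R) (r s : R) : Prop :=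
  ∃ (y : Rˣ) (e : R) (x : Rˣ) (b : Rˣ) (f : R) (a : Rˣ),
    rcs.RSF r y e x ∧ rcs.RSF s b f a ∧ idemLE e f ∧
    ∃ q ∈ parabolic rcs.cs (rcs.lamStar e), ∃ p ∈ parabolic rcs.cs (rcs.upperStar f),
      bruhatLE rcs.cs x ((q * p) * a) ∧ bruhatLE rcs.cs (b * (q * p)⁻¹) y

end RennerCoxeterSystem


open List

namespace StrongExch

variable {B : Type*} {W : Type*} [Group W] [DecidableEq W] {M : CoxeterMatrix B}
  (cs : CoxeterSystem M W)

local prefix:100 "s" => cs.simple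
local prefix:100 "π" => cs.wordProd
local prefix:100 "ℓ" => cs.length
local prefix:100 "ris" => cs.rightInvSeq

lemma ris_cons (i : B) (ω : List B) :
    ris (i :: ω) = (π ω)⁻¹ * s i * π ω :: ris ω := rfl

def phiFun (i : B) : W × ZMod 2 → W × ZMod 2 :=
  fun x => (s i * x.1 * s i, x.2 + if x.1 = s i then 1 else 0)

lemma phiFun_invol (i : B) : Function.Involutive (phiFun cs i) := by
  rintro ⟨x1, x2⟩
  unfold phiFun
  simp only
  have h1 : s i * (s i * x1 * s i) * s i = x1 := by
    simp [mul_assoc]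
  have h2 : (s i * x1 * s i = s i) ↔ (x1 = s i) := by
    constructor
    · intro h
      have := congrArg (fun y => s i * y * s i) h
      simpa [mul_assoc] using this
    · intro h; simp [h]
  by_cases hx : x1 = s i
  · rw [if_pos hx, if_pos (h2.mpr hx), h1]
    have : (x2 + 1) + 1 = x2 := by
      rw [add_assoc]
      norm_num
      exact left_eq_add.mpr rfl
    rw [this]
  · rw [if_neg hx, if_neg (fun h => hx (h2.mp h)), h1]
    simp

def phiP (i : B) : Equiv.Perm (W × ZMod 2) := Function.Involutive.toPerm _ (phiFun_invol cs i)

lemma phiP_apply (i : B) (x : W × ZMod 2) : phiP cs i x = phiFun cs i x := rfl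

lemma prodPhi_apply (ω : List B) (x : W × ZMod 2) :
    (ω.map (phiP cs)).prod x =
      (π ω * x.1 * (π ω)⁻¹, x.2 + ((ris ω).count x.1 : ZMod 2)) := by
  induction ω generalizing x with
  | nil => simp
  | cons i ω ih =>
    rw [List.map_cons, List.prod_cons, Equiv.Perm.mul_apply, ih, phiP_apply]
    unfold phiFun
    rw [ris_cons, cs.wordProd_cons]
    simp only [List.count_cons]
    have hiff : (π ω * x.1 * (π ω)⁻¹ = s i) ↔ (x.1 = (π ω)⁻¹ * s i * π ω) := by
      constructor
      · intro h
        rw [← h]; group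
      · intro h
        rw [h]; group
    rw [Prod.mk.injEq]
    constructor
    · simp [mul_assoc]
    · by_cases hx : x.1 = (π ω)⁻¹ * s i * π ω
      · rw [if_pos (hiff.mpr hx), if_pos (beq_iff_eq.mpr hx.symm)]
        push_cast
        ring
      · rw [if_neg (fun h => hx (hiff.mp h)), if_neg (fun h => hx (beq_iff_eq.mp h).symm)]
        push_cast
        ring

/-- the word `[i, j, i, j, ...]` of length `2 * m`. -/
def repIJ (i j : B) : ℕ → List B
  | 0 => []
  | (m+1) => i :: j :: repIJ i j m

lemma prod_phiP_repIJ (i j : B) (m : ℕ) :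
    (phiP cs i * phiP cs j) ^ m = ((repIJ i j m).map (phiP cs)).prod := by
  induction m with
  | zero => simp [repIJ]
  | succ m ih => rw [pow_succ', ih, repIJ]; simp [mul_assoc]

lemma wordProd_repIJ (i j : B) (m : ℕ) : π (repIJ i j m) = (s i * s j) ^ m := by
  induction m with
  | zero => simp [repIJ]
  | succ m ih =>
    rw [repIJ, cs.wordProd_cons, cs.wordProd_cons, ih, pow_succ']
    group

lemma simple_mul_pow (i j : B) (m : ℕ) :
    s j * (s i * s j) ^ m = ((s i * s j)⁻¹) ^ m * s j := by
  induction m with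
  | zero => simp
  | succ m ih =>
    have h : s j * (s i * s j) = (s i * s j)⁻¹ * s j := by
      rw [mul_inv_rev, cs.inv_simple, cs.inv_simple, mul_assoc]
    rw [pow_succ', ← mul_assoc, h, mul_assoc, ih, ← mul_assoc, ← pow_succ']

lemma aux2 (i j : B) (m : ℕ) :
    ((s i * s j) ^ m)⁻¹ * s j * (s i * s j) ^ m =
      ((s i * s j)⁻¹) ^ (2*m) * s j := by
  rw [mul_assoc, simple_mul_pow cs i j m, ← inv_pow, ← mul_assoc, ← pow_add, two_mul]

lemma aux1 (i j : B) (m : ℕ) :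
    (s j * (s i * s j) ^ m)⁻¹ * s i * (s j * (s i * s j) ^ m) =
      ((s i * s j)⁻¹) ^ (2*m+1) * s j := by
  have hq : s j * s i = (s i * s j)⁻¹ := by
    rw [mul_inv_rev, cs.inv_simple, cs.inv_simple]
  calc (s j * (s i * s j) ^ m)⁻¹ * s i * (s j * (s i * s j) ^ m)
      = ((s i * s j) ^ m)⁻¹ * ((s j)⁻¹ * s i * s j) * (s i * s j) ^ m := by group
    _ = ((s i * s j) ^ m)⁻¹ * ((s j * s i) * s j) * (s i * s j) ^ m := by
        rw [cs.inv_simple]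
    _ = ((s i * s j) ^ m)⁻¹ * (s i * s j)⁻¹ * (s j * (s i * s j) ^ m) := by
        rw [hq]; group
    _ = ((s i * s j)⁻¹) ^ m * (s i * s j)⁻¹ * (((s i * s j)⁻¹) ^ m * s j) := by
        rw [simple_mul_pow cs i j m, inv_pow]
    _ = ((s i * s j)⁻¹) ^ (m + 1 + m) * s j := by
        rw [pow_add, pow_add, pow_one]; group
    _ = _ := by congr 2; omega

lemma ris_repIJ (i j : B) (m : ℕ) :
    ris (repIJ i j m) =
      ((List.range (2 * m)).reverse).map (fun k => ((s i * s j)⁻¹) ^ k * s j) := by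
  induction m with
  | zero => simp [repIJ]
  | succ m ih =>
    have hrange : (List.range (2 * (m+1))).reverse =
        (2*m+1) :: (2*m) :: (List.range (2 * m)).reverse := by
      have h1 : 2 * (m+1) = (2*m+1) + 1 := by ring
      rw [h1, List.range_succ, List.range_succ]
      simp
    have hπ : π (repIJ i j m) = (s i * s j) ^ m := wordProd_repIJ cs i j m
    rw [hrange, repIJ, ris_cons, ris_cons, ih, cs.wordProd_cons, hπ]
    simp only [List.map_cons]
    congr 1
    · exact aux1 cs i j m
    congr 1
    · exact aux2 cs i j m

lemma count_ris_repIJ_even (i j : B) (t : W) (hm : (s i * s j) ^ (M i j) = 1) :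
    ∃ c : ℕ, ((ris (repIJ i j (M i j))).count t) = 2 * c := by
  rw [ris_repIJ]
  set q := (s i * s j)⁻¹ with hq
  set f : ℕ → W := fun k => q ^ k * s j with hf
  have hqm : q ^ (M i j) = 1 := by rw [hq, inv_pow, hm, inv_one]
  rw [List.map_reverse, List.count_reverse, two_mul, List.range_add,
    List.map_append, List.count_append]
  have hsame : (List.map f (List.map (fun x => M i j + x) (List.range (M i j)))) =
      List.map f (List.range (M i j)) := by
    rw [List.map_map]
    apply List.map_congr_left
    intro k _
    show f (M i j + k) = f k
    rw [hf]
    simp only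
    rw [pow_add, hqm, one_mul]
  rw [hsame]
  exact ⟨_, (two_mul _).symm⟩

lemma liftable : M.IsLiftable (phiP cs) := by
  intro i j
  apply Equiv.ext
  rintro ⟨t, ε⟩
  rw [prod_phiP_repIJ]
  rw [prodPhi_apply]
  have h1 : π (repIJ i j (M i j)) = 1 := by
    rw [wordProd_repIJ]; exact cs.simple_mul_simple_pow i j
  obtain ⟨c, hc⟩ := count_ris_repIJ_even cs i j t (cs.simple_mul_simple_pow i j)
  rw [h1, hc]
  simp only [one_mul, inv_one, mul_one, Equiv.Perm.coe_one, id_eq]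
  rw [Prod.mk.injEq]
  constructor
  · rfl
  · have h0 : ((2 * c : ℕ) : ZMod 2) = 0 := by
      push_cast
      rw [show ((2 : ZMod 2) = 0) by decide]
      ring
    rw [h0, add_zero]

/-- The reflection-parity representation. -/
def theta : W →* Equiv.Perm (W × ZMod 2) := cs.lift ⟨phiP cs, liftable cs⟩

lemma theta_simple (i : B) : theta cs (s i) = phiP cs i :=
  cs.lift_apply_simple (liftable cs) i

lemma theta_wordProd (ω : List B) : theta cs (π ω) = (ω.map (phiP cs)).prod := by
  unfold CoxeterSystem.wordProd
  rw [MonoidHom.map_list_prod, List.map_map]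
  congr 1
  apply List.map_congr_left
  intro i _
  exact theta_simple cs i

/-- The parity of the number of occurrences of `t` in any inversion sequence of `w`. -/
def eta (w t : W) : ZMod 2 := (theta cs w (t, 0)).2

lemma eta_eq_count (ω : List B) (t : W) :
    eta cs (π ω) t = ((ris ω).count t : ZMod 2) := by
  unfold eta
  rw [theta_wordProd, prodPhi_apply]
  simp

lemma theta_apply (w t : W) (ε : ZMod 2) :
    theta cs w (t, ε) = (w * t * w⁻¹, ε + eta cs w t) := by
  obtain ⟨ω, hω⟩ := cs.wordProd_surjective w
  subst hω
  rw [theta_wordProd, prodPhi_apply, eta_eq_count]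

lemma eta_mul (u v t : W) : eta cs (u * v) t = eta cs v t + eta cs u (v * t * v⁻¹) := by
  unfold eta
  rw [map_mul, Equiv.Perm.mul_apply, theta_apply, theta_apply, theta_apply]
  simp [mul_assoc]

lemma eta_one (t : W) : eta cs 1 t = 0 := by
  unfold eta
  rw [map_one]
  rfl

lemma eta_inv (u t : W) : eta cs u⁻¹ (u * t * u⁻¹) = eta cs u t := by
  have h := eta_mul cs u⁻¹ u t
  rw [inv_mul_cancel, eta_one] at h
  have h2 : ∀ a b : ZMod 2, 0 = a + b → b = a := by decide
  exact h2 _ _ h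

lemma eta_simple_self (i : B) : eta cs (s i) (s i) = 1 := by
  unfold eta
  rw [theta_simple, phiP_apply]
  unfold phiFun
  simp

lemma eta_refl_self {t : W} (ht : cs.IsReflection t) : eta cs t t = 1 := by
  obtain ⟨u, i, rfl⟩ := ht
  have e1 : u * s i * u⁻¹ = u * (s i * u⁻¹) := by group
  rw [e1, eta_mul]
  have e2 : s i * u⁻¹ * (u * (s i * u⁻¹)) * (s i * u⁻¹)⁻¹ = s i := by
    have : s i * u⁻¹ * (u * (s i * u⁻¹)) * (s i * u⁻¹)⁻¹
        = s i * (u⁻¹ * u) * s i * (u⁻¹ * u) * (s i)⁻¹ := by group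
    rw [this]
    simp
  rw [e2, eta_mul]
  have e3 : u⁻¹ * (u * (s i * u⁻¹)) * u⁻¹⁻¹ = s i := by group
  rw [e3, eta_simple_self]
  have e4 : u * (s i * u⁻¹) = u * s i * u⁻¹ := by group
  rw [e4, eta_inv]
  have h2 : ∀ a b : ZMod 2, a = b → b + 1 + a = 1 := by decide
  exact h2 _ _ rfl

lemma mem_ris_of_eta_one {w t : W} (h : eta cs w t = 1) {ω : List B} (hω : π ω = w) :
    t ∈ ris ω := by
  subst hω
  rw [eta_eq_count] at h
  by_contra hmem
  rw [List.count_eq_zero.mpr hmem] at h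
  simp at h

lemma lt_of_eta_one {w t : W} (h : eta cs w t = 1) : ℓ (w * t) < ℓ w := by
  obtain ⟨ω, hred, hw⟩ := cs.exists_reduced_word' w
  have hmem : t ∈ ris ω := mem_ris_of_eta_one cs h hw.symm
  have := (cs.isRightInversion_of_mem_rightInvSeq hred hmem).2
  rwa [← hw] at this

lemma eta_of_lt {w t : W} (ht : cs.IsReflection t) (h : ℓ (w * t) < ℓ w) :
    eta cs w t = 1 := by
  have hcases : ∀ a : ZMod 2, a = 0 ∨ a = 1 := by decide
  rcases hcases (eta cs w t) with h0 | h1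
  · exfalso
    have e1 : eta cs (w * t) t = 1 := by
      rw [eta_mul, eta_refl_self cs ht]
      have e2 : t * t * t⁻¹ = t := by
        rw [ht.mul_self, one_mul, ht.inv]
      rw [e2, h0]
      decide
    have := lt_of_eta_one cs e1
    rw [mul_assoc, ht.mul_self, mul_one] at this
    exact lt_asymm h this
  · exact h1

section Longest

variable {w₀ : W} (hw₀ : ∀ w : W, w ≠ w₀ → cs.length w < cs.length w₀)

include hw₀

lemma length_le_w0 (u : W) : ℓ u ≤ ℓ w₀ := by
  by_cases h : u = w₀
  · rw [h]
  · exact le_of_lt (hw₀ u h)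

lemma w0_inv : w₀⁻¹ = w₀ := by
  by_contra h
  have := hw₀ w₀⁻¹ h
  rw [cs.length_inv] at this
  omega

lemma w0_mul_self : w₀ * w₀ = 1 := by
  nth_rw 2 [← w0_inv cs hw₀]
  exact mul_inv_cancel w₀

lemma refl_lt_w0 {t : W} (ht : cs.IsReflection t) : ℓ (w₀ * t) < ℓ w₀ := by
  apply hw₀
  intro heq
  exact ht.length_mul_left_ne w₀ (by rw [heq])

lemma length_mul_w0 (u : W) : ℓ (u * w₀) + ℓ u = ℓ w₀ := by
  obtain ⟨Ω, hred, hΩ⟩ := cs.exists_reduced_word' w₀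
  set T : Finset W := (ris Ω).toFinset with hT
  have hcardT : T.card = ℓ w₀ := by
    rw [hT, List.toFinset_card_of_nodup hred.nodup_rightInvSeq, cs.length_rightInvSeq, ← hred, ← hΩ]
  have hreflT : ∀ t ∈ T, cs.IsReflection t := fun t htT =>
    cs.isReflection_of_mem_rightInvSeq Ω (List.mem_toFinset.mp htT)
  have hetaw0 : ∀ t : W, cs.IsReflection t → eta cs w₀ t = 1 := fun t ht =>
    eta_of_lt cs ht (refl_lt_w0 cs hw₀ ht)
  have hTrefl : ∀ t : W, cs.IsReflection t → t ∈ T := fun t ht =>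
    List.mem_toFinset.mpr (mem_ris_of_eta_one cs (hetaw0 t ht) hΩ.symm)
  have hlen : ∀ v : W, ℓ v = (T.filter (fun t => eta cs v t = 1)).card := by
    intro v
    obtain ⟨ω, hredω, hv⟩ := cs.exists_reduced_word' v
    have hfe : T.filter (fun t => eta cs v t = 1) = (ris ω).toFinset := by
      ext t
      simp only [Finset.mem_filter, List.mem_toFinset]
      constructor
      · rintro ⟨-, h1⟩
        exact mem_ris_of_eta_one cs h1 hv.symm
      · intro hmem
        refine ⟨hTrefl _ (cs.isReflection_of_mem_rightInvSeq ω hmem), ?_⟩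
        rw [hv, eta_eq_count]
        rw [List.count_eq_one_of_mem hredω.nodup_rightInvSeq hmem]
        rfl
    rw [hfe, List.toFinset_card_of_nodup hredω.nodup_rightInvSeq, cs.length_rightInvSeq,
      ← hredω, ← hv]
  have h1 : ∀ t ∈ T, eta cs (u * w₀) t = 1 + eta cs u (w₀ * t * w₀⁻¹) := by
    intro t htT
    rw [eta_mul, hetaw0 t (hreflT t htT)]
  have hneg : T.filter (fun t => ¬ (eta cs (u * w₀) t = 1)) =
      T.filter (fun t => eta cs u (w₀ * t * w₀⁻¹) = 1) := by
    ext t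
    simp only [Finset.mem_filter]
    constructor
    · rintro ⟨htT, hne⟩
      refine ⟨htT, ?_⟩
      rw [h1 t htT] at hne
      revert hne
      have : ∀ a : ZMod 2, ¬ (1 + a = 1) → a = 1 := by decide
      exact this _
    · rintro ⟨htT, he⟩
      refine ⟨htT, ?_⟩
      rw [h1 t htT, he]
      decide
  have hbij : (T.filter (fun t => eta cs u (w₀ * t * w₀⁻¹) = 1)).card =
      (T.filter (fun t => eta cs u t = 1)).card := by
    apply Finset.card_bij (fun t _ => w₀ * t * w₀⁻¹)
    · rintro t ht
      simp only [Finset.mem_filter] at ht ⊢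
      exact ⟨hTrefl _ ((hreflT t ht.1).conj w₀), ht.2⟩
    · intro a ha b hb hab
      exact mul_left_cancel (mul_right_cancel hab)
    · intro y hy
      simp only [Finset.mem_filter] at hy
      refine ⟨w₀⁻¹ * y * w₀, ?_, by group⟩
      simp only [Finset.mem_filter]
      have hyr : cs.IsReflection (w₀⁻¹ * y * w₀) := by
        have := (hreflT y hy.1).conj w₀⁻¹
        simpa using this
      constructor
      · exact hTrefl _ hyr
      · have : w₀ * (w₀⁻¹ * y * w₀) * w₀⁻¹ = y := by group
        rw [this]
        exact hy.2
  have hsplit : (T.filter (fun t => eta cs (u * w₀) t = 1)).card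
      + (T.filter (fun t => ¬ (eta cs (u * w₀) t = 1))).card = T.card :=
    Finset.card_filter_add_card_filter_not (fun t => eta cs (u * w₀) t = 1)
  rw [hneg, hbij, ← hlen (u * w₀), ← hlen u, hcardT] at hsplit
  exact hsplit

lemma length_simple_mul_w0 (i : B) : ℓ (s i * w₀) + 1 = ℓ w₀ := by
  have := length_mul_w0 cs hw₀ (s i)
  rwa [cs.length_simple] at this

lemma length_w0_mul_simple (i : B) : ℓ (w₀ * s i) + 1 = ℓ w₀ := by
  have h : ℓ (w₀ * s i) = ℓ (s i * w₀) := by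
    rw [← cs.length_inv (w₀ * s i), mul_inv_rev, cs.inv_simple, w0_inv cs hw₀]
  rw [h]
  exact length_simple_mul_w0 cs hw₀ i

lemma w0_conj_simple (i : B) : ∃ j, w₀ * s i * w₀ = s j := by
  have h1 := length_mul_w0 cs hw₀ (w₀ * s i)
  have h2 := length_w0_mul_simple cs hw₀ i
  have h3 : ℓ (w₀ * s i * w₀) = 1 := by omega
  exact cs.length_eq_one_iff.mp h3

end Longest

end StrongExch


namespace Stmt19Aux

variable {R : Type*} [Monoid R] (w₀ : Rˣ) (hsq : w₀ * w₀ = 1)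

include hsq

lemma val_sq : (↑w₀ : R) * ↑w₀ = 1 := by
  rw [← Units.val_mul, hsq, Units.val_one]

lemma KK (x : R) : (↑w₀ : R) * (↑w₀ * x) = x := by
  rw [← mul_assoc, val_sq w₀ hsq, one_mul]

lemma XX (x : R) : x * ↑w₀ * ↑w₀ = x := by
  rw [mul_assoc, val_sq w₀ hsq, mul_one]

lemma phiphi (x : R) : ↑w₀ * (↑w₀ * x * ↑w₀) * ↑w₀ = x := by
  simp only [mul_assoc, KK w₀ hsq, val_sq w₀ hsq, mul_one]

lemma phi_mul (a b : R) :
    (↑w₀ * a * ↑w₀) * (↑w₀ * b * ↑w₀) = ↑w₀ * (a * b) * ↑w₀ := by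
  simp only [mul_assoc, KK w₀ hsq]

lemma phi_inj {a b : R} (h : (↑w₀ : R) * a * ↑w₀ = ↑w₀ * b * ↑w₀) : a = b := by
  have h2 := congrArg (fun y => (↑w₀ : R) * y * ↑w₀) h
  simpa only [phiphi w₀ hsq] using h2

lemma comm_iff (x e : R) :
    x * (↑w₀ * e * ↑w₀) = (↑w₀ * e * ↑w₀) * x ↔
      (↑w₀ * x * ↑w₀) * e = e * (↑w₀ * x * ↑w₀) := by
  constructor <;> intro h <;>
    · have h2 := congrArg (fun y => (↑w₀ : R) * y * ↑w₀) h
      simp only [mul_assoc, KK w₀ hsq, val_sq w₀ hsq, mul_one] at h2 ⊢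
      exact h2

lemma fix_iff (x e : R) :
    x * (↑w₀ * e * ↑w₀) = ↑w₀ * e * ↑w₀ ↔ (↑w₀ * x * ↑w₀) * e = e := by
  constructor <;> intro h <;>
    · have h2 := congrArg (fun y => (↑w₀ : R) * y * ↑w₀) h
      simp only [mul_assoc, KK w₀ hsq, val_sq w₀ hsq, mul_one] at h2 ⊢
      exact h2

lemma fixr_iff (x e : R) :
    (↑w₀ * e * ↑w₀) * x = ↑w₀ * e * ↑w₀ ↔ e * (↑w₀ * x * ↑w₀) = e := by
  constructor <;> intro h <;>
    · have h2 := congrArg (fun y => (↑w₀ : R) * y * ↑w₀) h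
      simp only [mul_assoc, KK w₀ hsq, val_sq w₀ hsq, mul_one] at h2 ⊢
      exact h2

lemma idemLE_phi_iff (a b : R) :
    idemLE ((↑w₀ : R) * a * ↑w₀) (↑w₀ * b * ↑w₀) ↔ idemLE a b := by
  unfold idemLE
  rw [phi_mul w₀ hsq, phi_mul w₀ hsq]
  constructor
  · rintro ⟨h1, h2⟩
    exact ⟨phi_inj w₀ hsq h1, phi_inj w₀ hsq h2⟩
  · rintro ⟨h1, h2⟩
    rw [h1, h2]
    exact ⟨rfl, rfl⟩

end Stmt19Aux

section ConjConstruction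

variable {B : Type*} {M : CoxeterMatrix B} {R : Type*} [Monoid R]

open Stmt19Aux

/-- The group-level conjugation-by-`w₀` transport of parabolic subgroups. -/
lemma parab_dir {G : Type*} [Group G] {M' : CoxeterMatrix B} (cs : CoxeterSystem M' G)
    (w₀ : G) (hsq : w₀ * w₀ = 1) (τ : B → B)
    (hτ : ∀ i, w₀ * cs.simple i * w₀ = cs.simple (τ i)) (J : Set B) :
    ∀ u ∈ parabolic cs J, w₀ * u * w₀ ∈ parabolic cs (τ '' J) := by
  have gKK : ∀ x : G, w₀ * (w₀ * x) = x := fun x => by rw [← mul_assoc, hsq, one_mul]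
  have hinv : w₀⁻¹ = w₀ := inv_eq_of_mul_eq_one_right hsq
  intro u hu
  unfold parabolic at hu ⊢
  induction hu using Subgroup.closure_induction with
  | mem x hx =>
    obtain ⟨j, hj, rfl⟩ := hx
    rw [hτ j]
    exact Subgroup.subset_closure ⟨τ j, ⟨j, hj, rfl⟩, rfl⟩
  | one =>
    rw [mul_one, hsq]
    exact one_mem _
  | mul x y hx hy ihx ihy =>
    have h : w₀ * (x * y) * w₀ = (w₀ * x * w₀) * (w₀ * y * w₀) := by
      simp only [mul_assoc, gKK]
    rw [h]
    exact mul_mem ihx ihy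
  | inv x hx ihx =>
    have h : w₀ * x⁻¹ * w₀ = (w₀ * x * w₀)⁻¹ := by
      rw [mul_inv_rev, mul_inv_rev, hinv, mul_assoc]
    rw [h]
    exact inv_mem ihx

lemma parab_conj {G : Type*} [Group G] {M' : CoxeterMatrix B} (cs : CoxeterSystem M' G)
    (w₀ : G) (hsq : w₀ * w₀ = 1) (τ : B → B)
    (hτ : ∀ i, w₀ * cs.simple i * w₀ = cs.simple (τ i)) (J : Set B) (v : G) :
    v ∈ parabolic cs (τ '' J) ↔ w₀ * v * w₀ ∈ parabolic cs J := by
  have gKK : ∀ x : G, w₀ * (w₀ * x) = x := fun x => by rw [← mul_assoc, hsq, one_mul]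
  constructor
  · intro hv
    have hτ' : ∀ i', i' ∈ τ '' J → ∃ j ∈ J, τ j = i' := fun i' hi' => by
      obtain ⟨j, hj, rfl⟩ := hi'
      exact ⟨j, hj, rfl⟩
    -- direct induction
    unfold parabolic at hv ⊢
    induction hv using Subgroup.closure_induction with
    | mem x hx =>
      obtain ⟨i', ⟨j, hj, rfl⟩, rfl⟩ := hx
      rw [← hτ j]
      have h : w₀ * (w₀ * cs.simple j * w₀) * w₀ = cs.simple j := by
        simp only [mul_assoc, gKK, hsq, mul_one]
      rw [h]
      exact Subgroup.subset_closure ⟨j, hj, rfl⟩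
    | one =>
      rw [mul_one, hsq]
      exact one_mem _
    | mul x y hx hy ihx ihy =>
      have h : w₀ * (x * y) * w₀ = (w₀ * x * w₀) * (w₀ * y * w₀) := by
        simp only [mul_assoc, gKK]
      rw [h]
      exact mul_mem ihx ihy
    | inv x hx ihx =>
      have hinv : w₀⁻¹ = w₀ := inv_eq_of_mul_eq_one_right hsq
      have h : w₀ * x⁻¹ * w₀ = (w₀ * x * w₀)⁻¹ := by
        rw [mul_inv_rev, mul_inv_rev, hinv, mul_assoc]
      rw [h]
      exact inv_mem ihx
  · intro hv
    have := parab_dir cs w₀ hsq τ hτ J _ hv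
    have h : w₀ * (w₀ * v * w₀) * w₀ = v := by
      simp only [mul_assoc, gKK, hsq, mul_one]
    rwa [h] at this

/-- The conjugated Renner–Coxeter system `(R, w₀ Λ w₀, S)`. -/
noncomputable def conjRCS (rcs : RennerCoxeterSystem B M R) (w₀ : Rˣ)
    (hsq : w₀ * w₀ = 1) (σ : B → B)
    (hσ : ∀ i, w₀ * rcs.cs.simple i * w₀ = rcs.cs.simple (σ i)) :
    RennerCoxeterSystem B M R where
  cs := rcs.cs
  Λ := (fun e => (↑w₀ : R) * e * ↑w₀) '' rcs.Λ
  idem_mem := by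
    rintro x ⟨e, he, rfl⟩
    show ((↑w₀ : R) * e * ↑w₀) * ((↑w₀ : R) * e * ↑w₀) = (↑w₀ : R) * e * ↑w₀
    rw [phi_mul w₀ hsq, rcs.idem_mem e he]
  factorizableL := rcs.factorizableL
  factorizableR := rcs.factorizableR
  meet_exists := rcs.meet_exists
  transversal := by
    intro f hf
    have hinvU : w₀⁻¹ = w₀ := inv_eq_of_mul_eq_one_right hsq
    obtain ⟨e₀, ⟨heΛ, w, hw⟩, huniq⟩ := rcs.transversal f hf
    have key2 : ∀ (v : Rˣ) (x : R),
        (↑(v * w₀) : R) * x * ↑(v * w₀)⁻¹ = ↑v * ((↑w₀ : R) * x * ↑w₀) * ↑v⁻¹ := by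
      intro v x
      have h2 : (v * w₀)⁻¹ = w₀ * v⁻¹ := by rw [mul_inv_rev, hinvU]
      rw [h2, Units.val_mul, Units.val_mul]
      simp only [mul_assoc]
    refine ⟨(↑w₀ : R) * e₀ * ↑w₀, ⟨⟨e₀, heΛ, rfl⟩, w * w₀, ?_⟩, ?_⟩
    · rw [key2 w ((↑w₀ : R) * e₀ * ↑w₀), phiphi w₀ hsq e₀]
      exact hw
    · rintro e' ⟨⟨e₁, he₁, rfl⟩, v, hv⟩
      show (↑w₀ : R) * e₁ * ↑w₀ = (↑w₀ : R) * e₀ * ↑w₀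
      simp only at hv
      have he : e₁ = e₀ := huniq e₁ ⟨he₁, v * w₀, by rw [key2 v e₁]; exact hv⟩
      rw [he]
  Λ_meet := by
    rintro x ⟨e, he, rfl⟩ y ⟨f, hf, rfl⟩
    obtain ⟨g, hgΛ, hgg, hge, hgf, hmax⟩ := rcs.Λ_meet e he f hf
    refine ⟨(↑w₀ : R) * g * ↑w₀, ⟨g, hgΛ, rfl⟩, ?_, ?_, ?_, ?_⟩
    · rw [phi_mul w₀ hsq, hgg]
    · exact (idemLE_phi_iff w₀ hsq g e).mpr hge
    · exact (idemLE_phi_iff w₀ hsq g f).mpr hgf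
    · intro h hh hhe hhf
      have hrw : h = (↑w₀ : R) * ((↑w₀ : R) * h * ↑w₀) * ↑w₀ := (phiphi w₀ hsq h).symm
      have hh' : ((↑w₀ : R) * h * ↑w₀) * ((↑w₀ : R) * h * ↑w₀) = (↑w₀ : R) * h * ↑w₀ := by
        rw [phi_mul w₀ hsq, hh]
      have h1 : idemLE ((↑w₀ : R) * h * ↑w₀) e := by
        rw [hrw] at hhe
        exact (idemLE_phi_iff w₀ hsq _ e).mp hhe
      have h2 : idemLE ((↑w₀ : R) * h * ↑w₀) f := by
        rw [hrw] at hhf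
        exact (idemLE_phi_iff w₀ hsq _ f).mp hhf
      have := hmax ((↑w₀ : R) * h * ↑w₀) hh' h1 h2
      rw [hrw]
      exact (idemLE_phi_iff w₀ hsq _ g).mpr this
  pair_conj := by
    intro e e' hee he'e' hle
    have hinvU : w₀⁻¹ = w₀ := inv_eq_of_mul_eq_one_right hsq
    obtain ⟨w, f, hfΛ, f', hf'Λ, hff', h1, h2⟩ := rcs.pair_conj e e' hee he'e' hle
    have key : ∀ x : R, (↑(w₀ * w) : R) * x * ↑(w₀ * w)⁻¹ =
        (↑w₀ : R) * ((↑w : R) * x * ↑w⁻¹) * ↑w₀ := by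
      intro x
      have hi : (w₀ * w)⁻¹ = w⁻¹ * w₀ := by rw [mul_inv_rev, hinvU]
      rw [hi, Units.val_mul, Units.val_mul]
      simp only [mul_assoc]
    refine ⟨w₀ * w, (↑w₀ : R) * f * ↑w₀, ⟨f, hfΛ, rfl⟩,
      (↑w₀ : R) * f' * ↑w₀, ⟨f', hf'Λ, rfl⟩,
      (idemLE_phi_iff w₀ hsq f f').mpr hff', ?_, ?_⟩
    · rw [key e, h1]
    · rw [key e', h2]
  upperStar_mono := by
    rintro x ⟨e, he, rfl⟩ y ⟨f, hf, rfl⟩ hle s hs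
    have hcast : ∀ s : B, (↑(rcs.cs.simple (σ s)) : R) =
        (↑w₀ : R) * ↑(rcs.cs.simple s) * ↑w₀ := by
      intro s
      rw [← hσ s, Units.val_mul, Units.val_mul]
    have us_iff : ∀ (e : R) (s : B),
        ((↑(rcs.cs.simple s) : R) * ((↑w₀ : R) * e * ↑w₀) =
            ((↑w₀ : R) * e * ↑w₀) * ↑(rcs.cs.simple s) ∧
          (↑(rcs.cs.simple s) : R) * ((↑w₀ : R) * e * ↑w₀) ≠ (↑w₀ : R) * e * ↑w₀) ↔
        ((↑(rcs.cs.simple (σ s)) : R) * e = e * ↑(rcs.cs.simple (σ s)) ∧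
          (↑(rcs.cs.simple (σ s)) : R) * e ≠ e) := by
      intro e s
      rw [hcast s]
      constructor
      · rintro ⟨hc, hn⟩
        exact ⟨(comm_iff w₀ hsq _ e).mp hc, fun h => hn ((fix_iff w₀ hsq _ e).mpr h)⟩
      · rintro ⟨hc, hn⟩
        exact ⟨(comm_iff w₀ hsq _ e).mpr hc, fun h => hn ((fix_iff w₀ hsq _ e).mp h)⟩
    have hle' : idemLE e f := (idemLE_phi_iff w₀ hsq e f).mp hle
    have hs' := (us_iff e s).mp hs
    have := rcs.upperStar_mono e he f hf hle' hs'
    exact (us_iff f s).mpr this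
  lam := fun f => σ '' rcs.lam ((↑w₀ : R) * f * ↑w₀)
  lamStar := fun f => σ '' rcs.lamStar ((↑w₀ : R) * f * ↑w₀)
  centralizer_eq := by
    rintro x ⟨e, he, rfl⟩
    have hphiphi : (↑w₀ : R) * ((↑w₀ : R) * e * ↑w₀) * ↑w₀ = e := phiphi w₀ hsq e
    ext w
    simp only [Set.mem_setOf_eq, SetLike.mem_coe]
    rw [hphiphi]
    have hcast : ((↑(w₀ * w * w₀) : R)) = (↑w₀ : R) * ↑w * ↑w₀ := by
      rw [Units.val_mul, Units.val_mul]
    have step1 : ((↑w : R) * ((↑w₀ : R) * e * ↑w₀) = ((↑w₀ : R) * e * ↑w₀) * ↑w) ↔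
        ((↑(w₀ * w * w₀) : R) * e = e * ↑(w₀ * w * w₀)) := by
      rw [hcast]
      exact comm_iff w₀ hsq (↑w) e
    have step2 : ((↑(w₀ * w * w₀) : R) * e = e * ↑(w₀ * w * w₀)) ↔
        (w₀ * w * w₀ ∈ parabolic rcs.cs (rcs.lam e)) := by
      have := Set.ext_iff.mp (rcs.centralizer_eq e he) (w₀ * w * w₀)
      simpa using this
    rw [step1, step2]
    exact (parab_conj rcs.cs w₀ hsq σ hσ (rcs.lam e) w).symm
  fixer_eq := by
    rintro x ⟨e, he, rfl⟩
    have hphiphi : (↑w₀ : R) * ((↑w₀ : R) * e * ↑w₀) * ↑w₀ = e := phiphi w₀ hsq e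
    ext w
    simp only [Set.mem_setOf_eq, SetLike.mem_coe]
    rw [hphiphi]
    have hcast : ((↑(w₀ * w * w₀) : R)) = (↑w₀ : R) * ↑w * ↑w₀ := by
      rw [Units.val_mul, Units.val_mul]
    have step1 : ((↑w : R) * ((↑w₀ : R) * e * ↑w₀) = (↑w₀ : R) * e * ↑w₀ ∧
          ((↑w₀ : R) * e * ↑w₀) * ↑w = (↑w₀ : R) * e * ↑w₀) ↔
        ((↑(w₀ * w * w₀) : R) * e = e ∧ e * ↑(w₀ * w * w₀) = e) := by
      rw [hcast]
      constructor
      · rintro ⟨h1, h2⟩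
        exact ⟨(fix_iff w₀ hsq _ e).mp h1, (fixr_iff w₀ hsq _ e).mp h2⟩
      · rintro ⟨h1, h2⟩
        exact ⟨(fix_iff w₀ hsq _ e).mpr h1, (fixr_iff w₀ hsq _ e).mpr h2⟩
    have step2 : ((↑(w₀ * w * w₀) : R) * e = e ∧ e * ↑(w₀ * w * w₀) = e) ↔
        (w₀ * w * w₀ ∈ parabolic rcs.cs (rcs.lamStar e)) := by
      have := Set.ext_iff.mp (rcs.fixer_eq e he) (w₀ * w * w₀)
      simpa using this
    rw [step1, step2]
    exact (parab_conj rcs.cs w₀ hsq σ hσ (rcs.lamStar e) w).symm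

end ConjConstruction

/-- If the unit group is finite with longest element `w₀`, then
`(R, w₀Λw₀, S)` is again a generalized Renner–Coxeter system; in particular
`w₀Λw₀` is a transversal of the idempotents for unit conjugation, and the
centralizer and fixer of each `e ∈ w₀Λw₀` are standard parabolic subgroups. -/
theorem stmt19 {B : Type*} {M : CoxeterMatrix B} {R : Type*} [Monoid R]
    (rcs : RennerCoxeterSystem B M R) (w₀ : Rˣ)
    (hw₀ : ∀ w : Rˣ, w ≠ w₀ → rcs.cs.length w < rcs.cs.length w₀) :
    (∃ rcs' : RennerCoxeterSystem B M R, rcs'.cs = rcs.cs ∧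
      rcs'.Λ = (fun e => (↑w₀ : R) * e * ↑w₀) '' rcs.Λ) ∧
    (∀ f : R, f * f = f → ∃! e : R,
      e ∈ (fun e => (↑w₀ : R) * e * ↑w₀) '' rcs.Λ ∧ ∃ w : Rˣ, f = ↑w * e * ↑w⁻¹) ∧
    (∀ e ∈ (fun e => (↑w₀ : R) * e * ↑w₀) '' rcs.Λ,
      (∃ I : Set B, {w : Rˣ | (↑w : R) * e = e * ↑w} = ↑(parabolic rcs.cs I)) ∧
      (∃ I : Set B, {w : Rˣ | (↑w : R) * e = e ∧ e * ↑w = e} = ↑(parabolic rcs.cs I))) := by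
  letI : DecidableEq Rˣ := Classical.decEq _
  have hsq : w₀ * w₀ = 1 := StrongExch.w0_mul_self rcs.cs hw₀
  choose σ hσ using fun i => StrongExch.w0_conj_simple rcs.cs hw₀ i
  set rcs' := conjRCS rcs w₀ hsq σ hσ with hrcs'
  refine ⟨⟨rcs', rfl, rfl⟩, ?_, ?_⟩
  · exact fun f hf => rcs'.transversal f hf
  · intro e he
    exact ⟨⟨_, rcs'.centralizer_eq e he⟩, ⟨_, rcs'.fixer_eq e he⟩⟩
end
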